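/- arXiv:0901.3346 — 2 statements merged into one kernel-verified Lean document; each statement's English description precedes it below -/
import Mathlib

section
/- Let ζ = e^{2πi/5}, F = Q(ζ), O = Z[ζ], and let q : O² → H₂(C) × H₂(C) be the map q(v) = (ι₁(v)ι₁(v)*, ι₂(v)ι₂(v)*), where ι₁, ι₂ are the two non-conjugate complex embeddings of F (sending ζ to ζ and ζ³ respectively) applied componentwise, and w* denotes conjugate transpose. If u, v ∈ O² are primitive vectors (meaning the ideal generated by the two coordinates is all of O), then q(u) = q(v) if and only if u = τv for some root of unity τ ∈ O. -/
noncomputable section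
open Complex ComplexConjugate

/-- A primitive fifth root of unity. -/
def ζ : ℂ := Complex.exp (2 * Real.pi * Complex.I / 5)

/-- The fundamental unit `(1 + √5)/2` of `k = ℚ(√5)`. -/
def u5 : ℂ := (1 + Real.sqrt 5) / 2

/-- The ring of integers `𝒪 = ℤ[ζ₅]` of `F = ℚ(ζ₅)`, as a subalgebra of `ℂ`. -/
def OF : Subalgebra ℤ ℂ := Algebra.adjoin ℤ {ζ}

/-- The ring of integers `𝒪_k = ℤ[(1+√5)/2]` of `k = ℚ(√5)`, as a subalgebra of `ℂ`. -/
def Ok : Subalgebra ℤ ℂ := Algebra.adjoin ℤ {u5}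

/-- The field `F = ℚ(ζ₅)`, as a `ℚ`-subalgebra of `ℂ`. -/
def Fq : Subalgebra ℚ ℂ := Algebra.adjoin ℚ {ζ}

/-- An element of `𝒪_k` is totally positive if every real embedding sends it to a
positive real. -/
def TotPos (x : Ok) : Prop := ∀ f : Ok →+* ℝ, 0 < f x

/-- `ζ` as an element of `𝒪 = ℤ[ζ₅]`. -/
def ζO : OF := ⟨ζ, Algebra.subset_adjoin rfl⟩

/-!
Entrywise equality of `ι(u)ι(u)*` and `ι(v)ι(v)*` says exactly that `ι(u) = t • ι(v)` for some
`t` on the unit circle. Primitivity of `v` gives a Bézout relation `a v₀ + b v₁ = 1`, and then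
`τ = a u₀ + b u₁ ∈ 𝒪` satisfies `ι(τ) = t` for every embedding `ι` at once. Up to complex
conjugation, `ι₁` and `ι₂` are all the embeddings of `𝒪` into `ℂ`, so every conjugate of the
algebraic integer `τ` has absolute value `1`, and `τ` is a root of unity by Kronecker's theorem.
-/

open IntermediateField

theorem mul_conj_eq_mul_conj_iff {ι : Type*} (u v : ι → ℂ) :
    (∀ i j, u i * conj (u j) = v i * conj (v j)) ↔ ∃ t : ℂ, ‖t‖ = 1 ∧ ∀ i, u i = t * v i := by
  constructor
  · intro h
    by_cases hv : ∀ i, v i = 0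
    · refine ⟨1, norm_one, fun i => ?_⟩
      have hii := h i i
      rw [hv i, zero_mul, mul_conj, ofReal_eq_zero, normSq_eq_zero] at hii
      rw [hii, hv i, mul_zero]
    obtain ⟨k, hk⟩ := not_forall.mp hv
    have hkk : ‖u k‖ = ‖v k‖ := by
      have hkk' := h k k
      rw [mul_conj, mul_conj, ofReal_inj, normSq_eq_norm_sq, normSq_eq_norm_sq] at hkk'
      exact (pow_left_inj₀ (norm_nonneg _) (norm_nonneg _) two_ne_zero).mp hkk'
    refine ⟨u k / v k, by rw [norm_div, hkk, div_self (norm_ne_zero_iff.mpr hk)], fun i => ?_⟩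
    have hck : conj (v k) ≠ 0 := (map_ne_zero _).mpr hk
    have hcross : u i * v k = u k * v i := by
      apply mul_right_cancel₀ hck
      linear_combination u k * h i k - u i * h k k
    field_simp
    linear_combination hcross
  · rintro ⟨t, ht, hu⟩ i j
    have htt : t * conj t = 1 := by rw [mul_conj, normSq_eq_norm_sq, ht]; norm_num
    rw [hu, hu, map_mul]
    linear_combination v i * conj (v j) * htt

theorem IsCoprime.exists_map_eq_of_map_eq_mul {R S : Type*} [CommRing R] [CommRing S]
    {u v : Fin 2 → R} (hv : IsCoprime (v 0) (v 1)) :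
    ∃ τ : R, ∀ (f : R →+* S) (t : S), (∀ i, f (u i) = t * f (v i)) → f τ = t := by
  obtain ⟨a, b, hab⟩ := hv
  refine ⟨a * u 0 + b * u 1, fun f t hu => ?_⟩
  have hab' := congrArg f hab
  rw [map_add, map_mul, map_mul, map_one] at hab'
  rw [map_add, map_mul, map_mul, hu 0, hu 1]
  linear_combination t * hab'

theorem exists_pow_eq_one_of_forall_norm_eq_one {R K : Type*} [CommRing R] [Field K]
    [NumberField K] {i : R →+* K} (hi : Function.Injective i) {x : R} (hx : IsIntegral ℤ x)
    (h : ∀ ψ : R →+* ℂ, ‖ψ x‖ = 1) : ∃ n, 0 < n ∧ x ^ n = 1 := by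
  obtain ⟨n, hn, hxn⟩ := NumberField.Embeddings.pow_eq_one_of_norm_eq_one K ℂ
    (hx.map i.toIntAlgHom) fun φ => h (φ.comp i)
  exact ⟨n, hn, hi (by simpa using hxn)⟩

theorem isPrimitiveRoot_zeta : IsPrimitiveRoot ζ 5 := by
  simpa [ζ] using Complex.isPrimitiveRoot_exp 5 (by norm_num)

theorem conj_zeta : conj ζ = ζ ^ 4 := by
  rw [← inv_eq_conj (norm_eq_one_of_pow_eq_one isPrimitiveRoot_zeta.pow_eq_one (by norm_num))]
  refine (eq_inv_of_mul_eq_one_left ?_).symm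
  rw [← pow_succ, isPrimitiveRoot_zeta.pow_eq_one]

instance : FiniteDimensional ℚ ℚ⟮ζ⟯ :=
  adjoin.finiteDimensional (isPrimitiveRoot_zeta.isIntegral (by norm_num)).tower_top

instance : NumberField ℚ⟮ζ⟯ := ⟨⟩

namespace OF

theorem adjoin_zetaO_eq_top : Algebra.adjoin ℤ {ζO} = ⊤ := by
  have hpre : ((↑) : OF → ℂ) ⁻¹' {ζ} = {ζO} := by ext x; simp [Subtype.ext_iff, ζO]
  rw [← hpre]; exact Algebra.adjoin_adjoin_coe_preimage

theorem ringHom_ext {f g : OF →+* ℂ} (h : f ζO = g ζO) : f = g := by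
  have hfg := AlgHom.ext_of_adjoin_eq_top adjoin_zetaO_eq_top (φ₁ := f.toIntAlgHom)
    (φ₂ := g.toIntAlgHom) (by simp [h])
  ext x; exact AlgHom.congr_fun hfg x

instance : Algebra.IsIntegral ℤ OF :=
  Algebra.IsIntegral.adjoin (by simpa using isPrimitiveRoot_zeta.isIntegral (by norm_num))

theorem le_adjoin : OF ≤ ℚ⟮ζ⟯.toSubalgebra.restrictScalars ℤ :=
  Algebra.adjoin_le (by simp)

theorem zetaO_pow_five : ζO ^ 5 = 1 := Subtype.ext isPrimitiveRoot_zeta.pow_eq_one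

theorem exists_apply_zetaO_eq_pow (ψ : OF →+* ℂ) : ∃ k, 1 ≤ k ∧ k < 5 ∧ ψ ζO = ζ ^ k := by
  have hψ : ψ ζO ^ 5 = 1 := by rw [← map_pow, zetaO_pow_five, map_one]
  obtain ⟨k, hk, hζk⟩ := isPrimitiveRoot_zeta.eq_pow_of_pow_eq_one hψ
  refine ⟨k, Nat.one_le_iff_ne_zero.mpr ?_, hk, hζk.symm⟩
  -- `ψ ζO = 1` would send `1 + ζ + ⋯ + ζ⁴ = 0` to `5 = 0`.
  rintro rfl
  have hsum : ∑ i ∈ Finset.range 5, ζO ^ i = 0 :=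
    Subtype.ext (by push_cast; exact isPrimitiveRoot_zeta.geom_sum_eq_zero (by norm_num))
  have h5 := congrArg ψ hsum
  norm_num [Finset.sum_range_succ, ← hζk] at h5


theorem exists_pow_eq_one_of_norm_eq_one {ι₂ : OF →+* ℂ} (hι₂ : ι₂ ζO = ζ ^ 3) {τ : OF}
    (h₁ : ‖(τ : ℂ)‖ = 1) (h₂ : ‖ι₂ τ‖ = 1) : ∃ n, 0 < n ∧ τ ^ n = 1 := by
  refine exists_pow_eq_one_of_forall_norm_eq_one
    (i := (OF.val : OF →+* ℂ).codRestrict ℚ⟮ζ⟯ fun x => le_adjoin x.2)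
    (RingHom.injective_codRestrict.mpr Subtype.val_injective)
    (Algebra.IsIntegral.isIntegral τ) fun ψ => ?_
  obtain ⟨k, hk₁, hk₅, hψ⟩ := exists_apply_zetaO_eq_pow ψ
  interval_cases k
  · rw [ringHom_ext (f := ψ) (g := OF.val) (by rw [hψ, pow_one]; rfl)]
    exact h₁
  · rw [ringHom_ext (f := ψ) (g := (starRingEnd ℂ).comp ι₂) ?_]
    · rw [RingHom.comp_apply, Complex.norm_conj, h₂]
    · rw [hψ, RingHom.comp_apply, hι₂, map_pow, conj_zeta, ← pow_mul,
        show 4 * 3 = 2 + 5 * 2 from rfl, pow_add, pow_mul, isPrimitiveRoot_zeta.pow_eq_one,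
        one_pow, mul_one]
  · rw [ringHom_ext (hψ.trans hι₂.symm)]
    exact h₂
  · rw [ringHom_ext (f := ψ) (g := (starRingEnd ℂ).comp OF.val) ?_]
    · rw [RingHom.comp_apply, Complex.norm_conj]; exact h₁
    · rw [hψ, RingHom.comp_apply, ← conj_zeta]; rfl

end OF

theorem stmt_2_general (ι₂ : OF →+* ℂ) (hι₂ : ι₂ ζO = ζ ^ 3)
    (u v : Fin 2 → OF) (hv : IsCoprime (v 0) (v 1)) :
    ((∀ i j, (u i : ℂ) * conj (u j : ℂ) = (v i : ℂ) * conj (v j : ℂ)) ∧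
     (∀ i j, ι₂ (u i) * conj (ι₂ (u j)) = ι₂ (v i) * conj (ι₂ (v j)))) ↔
      ∃ τ : OF, (∃ n : ℕ, 0 < n ∧ τ ^ n = 1) ∧ ∀ i, u i = τ * v i := by
  rw [mul_conj_eq_mul_conj_iff, mul_conj_eq_mul_conj_iff (fun i => ι₂ (u i))]
  constructor
  · rintro ⟨⟨t, ht, hut⟩, ⟨s, hs, hus⟩⟩
    obtain ⟨τ, hτ⟩ := hv.exists_map_eq_of_map_eq_mul (u := u) (S := ℂ)
    have hτ₁ : (τ : ℂ) = t := hτ OF.val t hut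
    have hτ₂ : ι₂ τ = s := hτ ι₂ s hus
    refine ⟨τ, OF.exists_pow_eq_one_of_norm_eq_one hι₂ (hτ₁ ▸ ht) (hτ₂ ▸ hs), fun i => ?_⟩
    exact Subtype.ext (by rw [hut, Subalgebra.coe_mul, hτ₁])
  · rintro ⟨τ, ⟨n, hn, hτn⟩, hu⟩
    have hnorm (f : OF →+* ℂ) : ‖f τ‖ = 1 :=
      norm_eq_one_of_pow_eq_one (by rw [← map_pow, hτn, map_one]) hn.ne'
    exact ⟨⟨τ, hnorm OF.val, fun i => by rw [hu]; rfl⟩,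
      ⟨ι₂ τ, hnorm ι₂, fun i => by rw [hu, map_mul]⟩⟩

/-- Two primitive vectors `u, v ∈ 𝒪²` satisfy `q(u) = q(v)` (equality of the pairs of
rank-one Hermitian matrices `ι₁(v)ι₁(v)*`, `ι₂(v)ι₂(v)*`, stated entrywise) iff
`u = τ v` for some root of unity `τ ∈ 𝒪`.  Here `ι₁` is the inclusion into `ℂ` and
`ι₂` sends `ζ ↦ ζ³`. -/
theorem stmt_2 (ι₂ : OF →+* ℂ) (hι₂ : ι₂ ζO = ζ ^ 3)
    (u v : Fin 2 → OF) (hu : IsCoprime (u 0) (u 1)) (hv : IsCoprime (v 0) (v 1)) :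
    ((∀ i j, (u i : ℂ) * conj (u j : ℂ) = (v i : ℂ) * conj (v j : ℂ)) ∧
     (∀ i j, ι₂ (u i) * conj (ι₂ (u j)) = ι₂ (v i) * conj (ι₂ (v j)))) ↔
      ∃ τ : OF, (∃ n : ℕ, 0 < n ∧ τ ^ n = 1) ∧ ∀ i, u i = τ * v i :=
  stmt_2_general ι₂ hι₂ u v hv
end
end

section
/- Let k = Q(√5) with ring of integers O_k and let η = u² where u = (1+√5)/2 is the fundamental unit. For every totally positive b ∈ O_k there exist α ∈ Z[ζ5] \ {0} and t ∈ O_k with t totally positive or t = 0, such that b = α·ᾱ + t. -/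
noncomputable section
open Complex ComplexConjugate

/-!
Identify `𝒪_k = ℤ[φ]` with the quadratic algebra `ℤ[ω]`, `ω² = 1 + ω`: this gives the two real
embeddings `σ₁, σ₂` (sending `φ` to `φ` and to `ψ = -φ⁻¹`) and makes the norm `σ₁ x · σ₂ x` an
integer. Given `b ≫ 0`, pick `m` with `φ^(2m) ≤ σ₁ b < φ^(2m+2)` and put `t = b - φ^(2m)`; the
unit `α = φ^m` lies in `ℤ[ζ₅]` since `φ = 1 + ζ + ζ⁴`, and it is real, so `α ᾱ = φ^(2m)`.
Certainly `σ₁ t ≥ 0`. As `σ₂ b ≥ 1 / σ₁ b`, the choice of `m` gives `σ₁ t · σ₂ t > -1`, the bound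
being exactly `-1` because `(φ² - 1)² = φ²`. So if `σ₂ t < 0`, the integer norm of `t` would
vanish, forcing `t = 0`. Hence both `σ₁ t, σ₂ t ≥ 0`: `t` is totally positive or zero.
-/

open Real goldenRatio
open scoped QuadraticAlgebra

abbrev GoldenInt := QuadraticAlgebra ℤ 1 1

namespace GoldenInt

variable {A : Type*} [Ring A]

def lift (r : A) (hr : r ^ 2 = r + 1) : GoldenInt →ₐ[ℤ] A :=
  QuadraticAlgebra.lift ⟨r, by simpa [sq, add_comm] using hr⟩

@[simp]
lemma lift_apply (r : A) (hr : r ^ 2 = r + 1) (z : GoldenInt) :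
    lift r hr z = z.re + z.im * r := by
  simp [lift, zsmul_eq_mul]

lemma lift_omega (r : A) (hr : r ^ 2 = r + 1) : lift r hr ω = r := by
  simp

lemma lift_injective {r : ℝ} (hr : r ^ 2 = r + 1) (hirr : Irrational r) :
    Function.Injective (lift r hr) := by
  refine (injective_iff_map_eq_zero _).mpr fun z hz => ?_
  rw [lift_apply] at hz
  have him : z.im = 0 := by
    by_contra h
    exact ((hirr.intCast_mul h).intCast_add z.re).ne_zero hz
  have hre : z.re = 0 := by simpa [him] using hz
  exact QuadraticAlgebra.ext hre him

lemma ringHom_ext {f g : GoldenInt →+* A} (h : f ω = g ω) : f = g :=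
  congrArg AlgHom.toRingHom <|
    QuadraticAlgebra.algHom_ext (f := f.toIntAlgHom) (g := g.toIntAlgHom) h

end GoldenInt

lemma eq_goldenRatio_or_eq_goldenConj {r : ℝ} (hr : r ^ 2 = r + 1) : r = φ ∨ r = ψ := by
  have : (r - φ) * (r - ψ) = 0 := by
    linear_combination hr - r * goldenRatio_add_goldenConj + goldenRatio_mul_goldenConj
  rcases mul_eq_zero.mp this with h | h
  · exact .inl (sub_eq_zero.mp h)
  · exact .inr (sub_eq_zero.mp h)

lemma map_units_zpow {M G₀ F : Type*} [Monoid M] [GroupWithZero G₀] [FunLike F M G₀]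
    [MonoidHomClass F M G₀] (f : F) (u : Mˣ) (m : ℤ) : f ↑(u ^ m) = f ↑u ^ m := by
  have := congrArg Units.val (map_zpow (Units.map (f : M →* G₀)) u m)
  rwa [Units.val_zpow_eq_zpow_val, Units.coe_map, Units.coe_map] at this

lemma goldenConj_zpow_two_mul (m : ℤ) : ψ ^ (2 * m) = (φ ^ (2 * m))⁻¹ := by
  rw [← inv_zpow, inv_goldenRatio, zpow_mul, zpow_mul, even_two.neg_zpow]

lemma u5_eq_goldenRatio : u5 = (φ : ℂ) := by
  simp [u5]

def goldenUnit (S : Subalgebra ℤ ℂ) (h : u5 ∈ S) : Sˣ :=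
  Units.mkOfMulEqOne ⟨u5, h⟩ (⟨u5, h⟩ - 1) <| Subtype.ext <| by
    show u5 * (u5 - 1) = 1
    rw [u5_eq_goldenRatio]
    exact_mod_cast by linear_combination goldenRatio_sq

lemma coe_goldenUnit_zpow (S : Subalgebra ℤ ℂ) (h : u5 ∈ S) (m : ℤ) :
    ((goldenUnit S h ^ m : Sˣ) : ℂ) = (φ ^ m : ℝ) := by
  show S.val _ = _
  rw [map_units_zpow S.val, ofReal_zpow, ← u5_eq_goldenRatio]
  rfl

namespace Ok

def gen : Ok := ⟨u5, Algebra.subset_adjoin rfl⟩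

@[simp]
lemma coe_gen : (gen : ℂ) = φ := u5_eq_goldenRatio

lemma gen_sq : gen ^ 2 = gen + 1 :=
  Subtype.ext <| show (gen : ℂ) ^ 2 = gen + 1 by rw [coe_gen]; exact_mod_cast goldenRatio_sq

lemma val_comp_lift : Ok.val.toRingHom.comp (GoldenInt.lift gen gen_sq).toRingHom =
    ofRealHom.comp (GoldenInt.lift φ goldenRatio_sq).toRingHom :=
  GoldenInt.ringHom_ext (by simp)

lemma lift_gen_bijective : Function.Bijective (GoldenInt.lift gen gen_sq) := by
  refine ⟨?_, ?_⟩
  · have h : Function.Injective (ofRealHom.comp (GoldenInt.lift φ goldenRatio_sq).toRingHom) :=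
      ofReal_injective.comp (GoldenInt.lift_injective goldenRatio_sq goldenRatio_irrational)
    rw [← val_comp_lift] at h
    exact Function.Injective.of_comp (f := Ok.val) h
  · rintro ⟨x, hx⟩
    have hle : Ok ≤ (Ok.val.comp (GoldenInt.lift gen gen_sq)).range :=
      Algebra.adjoin_le (Set.singleton_subset_iff.mpr ⟨ω, by simp [gen]⟩)
    obtain ⟨z, hz⟩ := hle hx
    exact ⟨z, Subtype.ext hz⟩

def equivGoldenInt : GoldenInt ≃ₐ[ℤ] Ok :=
  AlgEquiv.ofBijective (GoldenInt.lift gen gen_sq) lift_gen_bijective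

lemma equivGoldenInt_omega : equivGoldenInt ω = gen := GoldenInt.lift_omega gen gen_sq

lemma ringHom_ext {A : Type*} [Ring A] {f g : Ok →+* A} (h : f gen = g gen) : f = g := by
  have : f.comp equivGoldenInt.toRingHom = g.comp equivGoldenInt.toRingHom :=
    GoldenInt.ringHom_ext (by simpa [equivGoldenInt_omega] using h)
  exact (RingHom.cancel_right equivGoldenInt.surjective).mp this

def embedding (r : ℝ) (hr : r ^ 2 = r + 1) : Ok →+* ℝ :=
  (GoldenInt.lift r hr).toRingHom.comp equivGoldenInt.symm.toRingHom

section embedding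

variable {r : ℝ} {hr : r ^ 2 = r + 1}

@[simp]
lemma embedding_equivGoldenInt (z : GoldenInt) :
    embedding r hr (equivGoldenInt z) = z.re + z.im * r := by
  simp [embedding]

lemma embedding_gen : embedding r hr gen = r := by
  simp [← equivGoldenInt_omega]

lemma embedding_injective (hirr : Irrational r) : Function.Injective (embedding r hr) :=
  (GoldenInt.lift_injective hr hirr).comp equivGoldenInt.symm.injective

end embedding

abbrev σ₁ : Ok →+* ℝ := embedding φ goldenRatio_sq
abbrev σ₂ : Ok →+* ℝ := embedding ψ goldenConj_sq

lemma eq_σ₁_or_eq_σ₂ (f : Ok →+* ℝ) : f = σ₁ ∨ f = σ₂ := by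
  have hf : f gen ^ 2 = f gen + 1 := by rw [← map_pow, gen_sq, map_add, map_one]
  rcases eq_goldenRatio_or_eq_goldenConj hf with h | h
  · exact .inl (ringHom_ext (h.trans embedding_gen.symm))
  · exact .inr (ringHom_ext (h.trans embedding_gen.symm))

lemma totPos_iff (x : Ok) : TotPos x ↔ 0 < σ₁ x ∧ 0 < σ₂ x := by
  refine ⟨fun h => ⟨h σ₁, h σ₂⟩, fun h f => ?_⟩
  rcases eq_σ₁_or_eq_σ₂ f with rfl | rfl
  exacts [h.1, h.2]

lemma σ₁_mul_σ₂ (x : Ok) : σ₁ x * σ₂ x = QuadraticAlgebra.norm (equivGoldenInt.symm x) := by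
  obtain ⟨z, rfl⟩ := equivGoldenInt.surjective x
  simp only [embedding_equivGoldenInt, AlgEquiv.symm_apply_apply, QuadraticAlgebra.norm_def]
  push_cast
  linear_combination (z.re * z.im : ℝ) * goldenRatio_add_goldenConj +
    (z.im ^ 2 : ℝ) * goldenRatio_mul_goldenConj

lemma eq_zero_of_abs_σ₁_mul_σ₂_lt_one {x : Ok} (h : |σ₁ x * σ₂ x| < 1) : x = 0 := by
  have hnorm : QuadraticAlgebra.norm (equivGoldenInt.symm x) = 0 := by
    rw [← Int.abs_lt_one_iff]; exact_mod_cast σ₁_mul_σ₂ x ▸ h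
  rcases mul_eq_zero.mp ((σ₁_mul_σ₂ x).trans (by rw [hnorm, Int.cast_zero])) with h₁ | h₂
  · exact embedding_injective goldenRatio_irrational (h₁.trans (map_zero σ₁).symm)
  · exact embedding_injective goldenConj_irrational (h₂.trans (map_zero σ₂).symm)

lemma totPos_or_eq_zero_of_nonneg {x : Ok} (h₁ : 0 ≤ σ₁ x) (h₂ : 0 ≤ σ₂ x) :
    TotPos x ∨ x = 0 := by
  by_cases hx : σ₁ x * σ₂ x = 0
  · exact .inr (eq_zero_of_abs_σ₁_mul_σ₂_lt_one (by simp [hx]))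
  · rcases mul_ne_zero_iff.mp hx with ⟨h₁', h₂'⟩
    exact .inl ((totPos_iff x).mpr ⟨h₁.lt_of_ne' h₁', h₂.lt_of_ne' h₂'⟩)

lemma σ₂_nonneg_of_neg_one_lt {x : Ok} (h₁ : 0 ≤ σ₁ x) (h : -1 < σ₁ x * σ₂ x) : 0 ≤ σ₂ x := by
  by_contra! h₂
  have hx := eq_zero_of_abs_σ₁_mul_σ₂_lt_one
    (abs_lt.mpr ⟨h, (mul_nonpos_of_nonneg_of_nonpos h₁ h₂.le).trans_lt one_pos⟩)
  simp [hx] at h₂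

lemma one_le_σ₁_mul_σ₂ {x : Ok} (h₁ : 0 < σ₁ x) (h₂ : 0 < σ₂ x) : 1 ≤ σ₁ x * σ₂ x := by
  have h := mul_pos h₁ h₂
  rw [σ₁_mul_σ₂, Int.cast_pos] at h
  rw [σ₁_mul_σ₂]
  exact_mod_cast h

lemma embedding_goldenUnit_zpow {r : ℝ} {hr : r ^ 2 = r + 1} (m : ℤ) :
    embedding r hr ↑(goldenUnit Ok gen.2 ^ m) = r ^ m := by
  rw [map_units_zpow]
  exact congrArg (· ^ m) embedding_gen

end Ok

lemma neg_one_lt_sub_mul_sub {B₁ B₂ x : ℝ} (hx : 0 < x) (h₁ : x ≤ B₁) (h₁' : B₁ < φ ^ 2 * x)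
    (hB : 1 ≤ B₁ * B₂) : -1 < (B₁ - x) * (B₂ - x⁻¹) := by
  by_cases hy : 0 ≤ B₂ - x⁻¹
  · exact neg_one_lt_zero.trans_le (mul_nonneg (sub_nonneg.mpr h₁) hy)
  have hc : 0 < 1 - x * B₂ := by
    have := mul_lt_mul_of_pos_left (sub_neg.mp (not_le.mp hy)) hx
    rw [mul_inv_cancel₀ hx.ne'] at this
    linarith
  have hB₁ : B₁ - x < φ * x := by linear_combination h₁' + x * goldenRatio_sq
  have hB₂ : φ - 1 < φ * (x * B₂) := by
    have h : 1 < φ ^ 2 * (x * B₂) := by nlinarith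
    have := mul_lt_mul_of_pos_left h (sub_pos.mpr one_lt_goldenRatio)
    linear_combination this + x * B₂ * φ * goldenRatio_sq
  have key : (B₁ - x) * (1 - x * B₂) < x := by
    nlinarith [mul_lt_mul_of_pos_right hB₁ hc, mul_pos hx (sub_pos.mpr hB₂)]
  have : (B₁ - x) * (B₂ - x⁻¹) = -((B₁ - x) * (1 - x * B₂)) / x := by field_simp; ring
  rw [this, lt_div_iff₀ hx]
  linarith

lemma u5_eq_one_add_zeta_add_zeta_pow_four : u5 = 1 + ζ + ζ ^ 4 := by
  have hζ4 : ζ ^ 4 = Complex.exp (-(2 * π / 5 : ℂ) * I) := by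
    rw [ζ, ← Complex.exp_nat_mul, ← mul_one (Complex.exp (-_ * I)), ← Complex.exp_two_pi_mul_I,
      ← Complex.exp_add]
    ring_nf
  have hcos : Real.cos (2 * π / 5) = (√5 - 1) / 4 := by
    rw [show 2 * π / 5 = 2 * (π / 5) by ring, Real.cos_two_mul, Real.cos_pi_div_five]
    nlinarith [Real.sq_sqrt (show (0 : ℝ) ≤ 5 by norm_num)]
  have hsum : ζ + ζ ^ 4 = (2 * Real.cos (2 * π / 5) : ℝ) := by
    push_cast
    rw [Complex.two_cos, hζ4, ζ]
    ring_nf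
  rw [add_assoc, hsum, hcos, u5]
  push_cast
  ring

lemma u5_mem_OF : u5 ∈ OF := by
  have hζ : ζ ∈ OF := Algebra.subset_adjoin rfl
  rw [u5_eq_one_add_zeta_add_zeta_pow_four]
  exact add_mem (add_mem (one_mem OF) hζ) (pow_mem hζ 4)

/-- Every totally positive `b ∈ 𝒪_k` can be written as `b = α·ᾱ + t` with
`α ∈ 𝒪 ∖ {0}` and `t ∈ 𝒪_k` totally positive or zero. -/
theorem stmt_8 (b : Ok) (hb : TotPos b) :
    ∃ α : OF, α ≠ 0 ∧ ∃ t : Ok, (TotPos t ∨ t = 0) ∧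
      (b : ℂ) = (α : ℂ) * conj (α : ℂ) + (t : ℂ) := by
  obtain ⟨hb₁, hb₂⟩ := (Ok.totPos_iff b).mp hb
  obtain ⟨m, hm₁, hm₂⟩ := exists_mem_Ico_zpow hb₁ (one_lt_pow₀ one_lt_goldenRatio two_ne_zero)
  have hpow (n : ℤ) : (φ ^ 2) ^ n = φ ^ (2 * n) := by rw [zpow_mul]; norm_cast
  rw [hpow] at hm₁
  rw [zpow_add_one₀ (by positivity), hpow, mul_comm] at hm₂
  set e : Ok := ↑(goldenUnit Ok Ok.gen.2 ^ (2 * m))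
  have ht₁ : 0 ≤ Ok.σ₁ (b - e) := by
    rw [map_sub, Ok.embedding_goldenUnit_zpow, sub_nonneg]
    exact hm₁
  have ht₂ : 0 ≤ Ok.σ₂ (b - e) := by
    refine Ok.σ₂_nonneg_of_neg_one_lt ht₁ ?_
    simp only [map_sub, e, Ok.embedding_goldenUnit_zpow, goldenConj_zpow_two_mul]
    exact neg_one_lt_sub_mul_sub (by positivity) hm₁ hm₂ (Ok.one_le_σ₁_mul_σ₂ hb₁ hb₂)
  refine ⟨↑(goldenUnit OF u5_mem_OF ^ m), Units.ne_zero _, b - e,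
    Ok.totPos_or_eq_zero_of_nonneg ht₁ ht₂, ?_⟩
  have he : (e : ℂ) = (φ ^ (2 * m) : ℝ) := coe_goldenUnit_zpow Ok _ _
  rw [Subalgebra.coe_sub, he, coe_goldenUnit_zpow, conj_ofReal, ← ofReal_mul,
    ← zpow_add₀ goldenRatio_ne_zero, two_mul]
  ring
end
end
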